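/- arXiv:1209.5805 — 2 statements merged into one kernel-verified Lean document; each statement's English description precedes it below -/
import Mathlib

section
/- Let A be a nonempty finite type and let C be a convex set of probability mass functions on A. If f* ∈ C attains the maximum of the entropy H over C, then the support of every g ∈ C is contained in the support of f*; i.e., for all g ∈ C and a ∈ A, g a > 0 implies f* a > 0. -/
/-!
Suppose `f a = 0 < g a` and move from `f` towards `g`: `h = (1 - t) f + t g`. By concavity of
`x ↦ -x log x`, every coordinate `b ≠ a` still contributes at least `(1 - t) · (-f b log f b)`,
while coordinate `a` contributes `-t g a log (t g a) = t (g a (-log t) - g a log g a)`. The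
bracket tends to `+∞` as `t → 0⁺`, so for small `t` the gain beats the loss `t · H(f)` and
`H(h) > H(f)`, contradicting maximality.
-/

open Finset

def IsPmf {A : Type*} [Fintype A] (p : A → ℝ) : Prop :=
  (∀ a, 0 ≤ p a) ∧ ∑ a, p a = 1

noncomputable def entropy {A : Type*} [Fintype A] (p : A → ℝ) : ℝ :=
  -∑ a, p a * Real.log (p a)

open Filter Topology Real

lemma IsPmf.le_one {A : Type*} [Fintype A] {p : A → ℝ} (hp : IsPmf p) (a : A) : p a ≤ 1 :=
  hp.2 ▸ single_le_sum (fun b _ => hp.1 b) (mem_univ a)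

lemma entropy_eq_sum_negMulLog {A : Type*} [Fintype A] (p : A → ℝ) :
    entropy p = ∑ a, negMulLog (p a) := by
  simp [entropy, negMulLog_eq_neg]

lemma one_sub_mul_negMulLog_le {x y t : ℝ} (hx : 0 ≤ x) (hy0 : 0 ≤ y) (hy1 : y ≤ 1)
    (ht0 : 0 ≤ t) (ht1 : t ≤ 1) :
    (1 - t) * negMulLog x ≤ negMulLog ((1 - t) * x + t * y) := by
  have hconc := concaveOn_negMulLog.2 (Set.mem_Ici.2 hx) (Set.mem_Ici.2 hy0)
    (sub_nonneg.2 ht1) ht0 (sub_add_cancel 1 t)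
  simp only [smul_eq_mul] at hconc
  nlinarith [negMulLog_nonneg hy0 hy1]

lemma exists_mul_lt_negMulLog_mul {y : ℝ} (hy : 0 < y) (E : ℝ) :
    ∃ t ∈ Set.Ioc (0 : ℝ) 1, t * E < negMulLog (t * y) := by
  have hgain : Tendsto (fun t => y * -log t - y * log y) (𝓝[>] 0) atTop :=
    tendsto_atTop_add_const_right _ _
      ((tendsto_neg_atBot_atTop.comp tendsto_log_nhdsGT_zero).const_mul_atTop hy)
  obtain ⟨t, ht, hlt⟩ :=
    (Filter.Eventually.and (Ioc_mem_nhdsGT one_pos) (hgain.eventually_gt_atTop E)).exists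
  refine ⟨t, ht, ?_⟩
  have hsplit : negMulLog (t * y) = t * (y * -log t - y * log y) := by
    rw [negMulLog, log_mul ht.1.ne' hy.ne']
    ring
  rw [hsplit]
  exact mul_lt_mul_of_pos_left hlt ht.1

lemma one_sub_mul_entropy_add_negMulLog_le {A : Type*} [Fintype A] {f g : A → ℝ}
    (hf : ∀ b, 0 ≤ f b) (hg : IsPmf g) {a : A} (hfa : f a = 0) {t : ℝ} (ht0 : 0 ≤ t)
    (ht1 : t ≤ 1) :
    (1 - t) * entropy f + negMulLog (t * g a) ≤ entropy ((1 - t) • f + t • g) := by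
  classical
  simp only [entropy_eq_sum_negMulLog, Pi.add_apply, Pi.smul_apply, smul_eq_mul,
    ← add_sum_erase univ _ (mem_univ a), hfa, negMulLog_zero, mul_zero, zero_add, mul_sum]
  rw [add_comm]
  gcongr with b
  exact one_sub_mul_negMulLog_le (hf b) (hg.1 b) (hg.le_one b) ht0 ht1

theorem stmt_0_general {A : Type*} [Fintype A] (C : Set (A → ℝ))
    (hpmf : ∀ p ∈ C, IsPmf p) (hconv : Convex ℝ C)
    (f : A → ℝ) (hfC : f ∈ C) (hmax : ∀ g ∈ C, entropy g ≤ entropy f) :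
    ∀ g ∈ C, ∀ a : A, g a > 0 → f a > 0 := by
  intro g hgC a hga
  by_contra hfa
  have hfa0 : f a = 0 := le_antisymm (not_lt.1 hfa) ((hpmf f hfC).1 a)
  obtain ⟨t, ⟨ht0, ht1⟩, hgain⟩ := exists_mul_lt_negMulLog_mul hga (entropy f)
  have hmem : (1 - t) • f + t • g ∈ C := hconv hfC hgC (by linarith) ht0.le (by ring)
  have hsegment :=
    one_sub_mul_entropy_add_negMulLog_le (hpmf f hfC).1 (hpmf g hgC) hfa0 ht0.le ht1
  linarith [hmax _ hmem]

/-- The entropy maximizer over a convex set of pmfs has maximal support. -/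
theorem stmt_0 {A : Type*} [Fintype A] [Nonempty A] (C : Set (A → ℝ))
    (hpmf : ∀ p ∈ C, IsPmf p) (hconv : Convex ℝ C)
    (f : A → ℝ) (hfC : f ∈ C) (hmax : ∀ g ∈ C, entropy g ≤ entropy f) :
    ∀ g ∈ C, ∀ a : A, g a > 0 → f a > 0 :=
  stmt_0_general C hpmf hconv f hfC hmax
end

section
/- Let Q be a transition kernel, F ⊆ S, f ∈ D(Q,F), and let K_f be the policy induced by f (relative to any fixed policy G). Then: (i) the support of f_S is disjoint from F; (ii) the support of f_S is closed under P_{K_f}-transitions, i.e., if f_S s > 0 and P_{K_f} s s' > 0 then f_S s' > 0; and consequently (iii) P_{K_f} s s' = 0 whenever f_S s > 0 and s' ∈ F. -/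
/-!
The balance equation writes `f_S s'` as a sum of nonnegative inflows `Q s u s' * f (s, u)`, so
`f_S s' = 0` forces every inflow into `s'` to vanish. For `s` in the support, `P_{K_f} s s'` is
exactly the inflow from `s` into `s'` divided by `f_S s`; hence it vanishes whenever `f_S s' = 0`,
in particular for `s' ∈ F`.
-/

open MeasureTheory Filter Finset

noncomputable section

def IsStochastic {S : Type*} [Fintype S] (P : S → S → ℝ) : Prop :=
  (∀ s s', 0 ≤ P s s') ∧ ∀ s, ∑ s', P s s' = 1

/-- The `n`-th binary digit of `ω`, as a real number `0` or `1`. -/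
def bitAt (ω : ℝ) (n : ℕ) : ℝ := if ⌊ω * 2 ^ (n + 1)⌋ % 2 = 1 then 1 else 0

/-- A sequence of i.i.d. uniform random variables on `[0,1)`, extracted from the binary
digits of a single uniform sample `ω ∈ [0,1)` by interleaving. -/
noncomputable def unifAt (ω : ℝ) (k : ℕ) : ℝ := ∑' n : ℕ, bitAt ω (Nat.pair k n) / 2 ^ (n + 1)

/-- CDF-inversion step function: given row `P s` and `x ∈ [0,1)`, produce the next state. -/
noncomputable def stepFun {S : Type*} [Fintype S] [Nonempty S] (P : S → S → ℝ) (s : S) (x : ℝ) : S :=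
  (Fintype.equivFin S).symm
    ((Fin.find? (fun i => @decide (x < ∑ j ∈ Finset.Iic i, P s ((Fintype.equivFin S).symm j))
      (Classical.propDecidable _))).getD ⟨0, Fintype.card_pos⟩)

/-- The trajectory of the Markov chain with transition matrix `P` started at `s0`,
driven by the i.i.d. uniforms extracted from `ω`. -/
noncomputable def trajFun {S : Type*} [Fintype S] [Nonempty S] (P : S → S → ℝ) (s0 : S) (ω : ℝ) :
    ℕ → S
  | 0 => s0
  | k + 1 => stepFun P (trajFun P s0 ω k) (unifAt ω k)

/-- The law `μ_{s0}` of the time-homogeneous Markov chain with transition matrix `P`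
started at `s0`, as a measure on path space `ℕ → S` (each copy of `S` carrying the
discrete σ-algebra `⊤`). -/
noncomputable def chainLaw {S : Type*} [Fintype S] [Nonempty S] (P : S → S → ℝ) (s0 : S) :
    @Measure (ℕ → S) (@MeasurableSpace.pi ℕ (fun _ => S) (fun _ => ⊤)) :=
  @Measure.map ℝ (ℕ → S) _ (@MeasurableSpace.pi ℕ (fun _ => S) (fun _ => ⊤))
    (trajFun P s0) (volume.restrict (Set.Ico (0 : ℝ) 1))

/-- `s` is recurrent for `P`: the chain started at `s` returns to `s` with probability one. -/
def Recurrent {S : Type*} [Fintype S] [Nonempty S] (P : S → S → ℝ) (s : S) : Prop :=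
  chainLaw P s {x | ∃ k ≥ 1, x k = s} = 1

/-- `t` is reachable from `s` under `P`: some `n`-step transition probability is positive. -/
def Reachable {S : Type*} [Fintype S] [DecidableEq S] (P : S → S → ℝ) (s t : S) : Prop :=
  ∃ n : ℕ, 0 < (Matrix.of P ^ n) s t

/-- A recurrent class of `P`: all states recurrent, mutually communicating, and closed. -/
def IsRecurrentClass {S : Type*} [Fintype S] [Nonempty S] [DecidableEq S]
    (P : S → S → ℝ) (C : Set S) : Prop :=
  (∀ s ∈ C, Recurrent P s) ∧
  (∀ s ∈ C, ∀ t ∈ C, Reachable P s t ∧ Reachable P t s) ∧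
  (∀ s ∈ C, ∀ t, t ∉ C → P s t = 0)

def IsKernel {S U : Type*} [Fintype S] [Fintype U] (Q : S → U → S → ℝ) : Prop :=
  (∀ s u s', 0 ≤ Q s u s') ∧ ∀ s u, ∑ s', Q s u s' = 1

def IsPolicy {S U : Type*} [Fintype U] (K : S → U → ℝ) : Prop :=
  (∀ s u, 0 ≤ K s u) ∧ ∀ s, ∑ u, K s u = 1

/-- Closed-loop transition matrix `P_K s s' = ∑_u K s u * Q s u s'`. -/
def closedLoop {S U : Type*} [Fintype U] (Q : S → U → S → ℝ) (K : S → U → ℝ) : S → S → ℝ :=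
  fun s s' => ∑ u, K s u * Q s u s'

/-- Marginal on states of a pmf on `S × U`. -/
def marginalS {S U : Type*} [Fintype U] (f : S × U → ℝ) : S → ℝ := fun s => ∑ u, f (s, u)

/-- The feasible set `D(Q,F)`. -/
def Feasible {S U : Type*} [Fintype S] [Fintype U] (Q : S → U → S → ℝ) (F : Set S)
    (f : S × U → ℝ) : Prop :=
  IsPmf f ∧ (∀ s' : S, marginalS f s' = ∑ s : S, ∑ u : U, Q s u s' * f (s, u)) ∧
  ∀ s ∈ F, marginalS f s = 0

/-- The policy induced by `f` (relative to a fixed policy `G`). -/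
noncomputable def inducedPolicy {S U : Type*} [Fintype U] (G : S → U → ℝ) (f : S × U → ℝ) :
    S → U → ℝ :=
  fun s u => if 0 < marginalS f s then f (s, u) / marginalS f s else G s u

/-- The set `S^R_{K,F}` of `F`-safe recurrent states under policy `K`. -/
def FSafeRecStates {S U : Type*} [Fintype S] [Nonempty S] [DecidableEq S] [Fintype U]
    (Q : S → U → S → ℝ) (F : Set S) (K : S → U → ℝ) : Set S :=
  {s | Recurrent (closedLoop Q K) s ∧
    ∀ t, Reachable (closedLoop Q K) s t → ∀ t' ∈ F, closedLoop Q K t t' = 0}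

/-- The maximal set `S^R_F = ⋃_K S^R_{K,F}` of `F`-safe recurrent states. -/
def SRF {S U : Type*} [Fintype S] [Nonempty S] [DecidableEq S] [Fintype U]
    (Q : S → U → S → ℝ) (F : Set S) : Set S :=
  ⋃ K ∈ {K : S → U → ℝ | IsPolicy K}, FSafeRecStates Q F K

section FeasibleSupport

variable {S U : Type*} [Fintype U] {f : S × U → ℝ}

theorem marginalS_nonneg (hf : ∀ a, 0 ≤ f a) (s : S) : 0 ≤ marginalS f s :=
  sum_nonneg fun u _ => hf (s, u)

theorem closedLoop_inducedPolicy_of_pos (Q : S → U → S → ℝ) (G : S → U → ℝ) {s : S}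
    (hs : 0 < marginalS f s) (s' : S) :
    closedLoop Q (inducedPolicy G f) s s' = (∑ u, Q s u s' * f (s, u)) / marginalS f s := by
  simp only [closedLoop, inducedPolicy, if_pos hs, sum_div]
  exact sum_congr rfl fun u _ => by ring

variable [Fintype S] {Q : S → U → S → ℝ} {F : Set S}

theorem Feasible.inflow_eq_zero (hQ : ∀ s u s', 0 ≤ Q s u s') (hf : Feasible Q F f) {s' : S}
    (hs' : marginalS f s' = 0) (s : S) (u : U) : Q s u s' * f (s, u) = 0 := by
  have hflow : ∑ x : S × U, Q x.1 x.2 s' * f x = 0 := by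
    rw [Fintype.sum_prod_type, ← hf.2.1 s', hs']
  exact congrFun ((Fintype.sum_eq_zero_iff_of_nonneg fun x => mul_nonneg (hQ _ _ _) (hf.1.1 x)).mp
    hflow) (s, u)

theorem Feasible.closedLoop_inducedPolicy_eq_zero (hQ : ∀ s u s', 0 ≤ Q s u s')
    (hf : Feasible Q F f) (G : S → U → ℝ) {s s' : S} (hs : 0 < marginalS f s)
    (hs' : marginalS f s' = 0) : closedLoop Q (inducedPolicy G f) s s' = 0 := by
  rw [closedLoop_inducedPolicy_of_pos Q G hs, sum_eq_zero fun u _ => hf.inflow_eq_zero hQ hs' s u,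
    zero_div]

theorem Feasible.marginalS_pos_of_closedLoop_pos (hQ : ∀ s u s', 0 ≤ Q s u s')
    (hf : Feasible Q F f) (G : S → U → ℝ) {s s' : S} (hs : 0 < marginalS f s)
    (hss' : 0 < closedLoop Q (inducedPolicy G f) s s') : 0 < marginalS f s' := by
  refine (marginalS_nonneg hf.1.1 s').lt_of_ne fun hs' => hss'.ne' ?_
  exact hf.closedLoop_inducedPolicy_eq_zero hQ G hs hs'.symm

end FeasibleSupport

theorem stmt_3_general {S U : Type*} [Fintype S] [Fintype U]
    (Q : S → U → S → ℝ) (hQ : IsKernel Q) (F : Set S)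
    (G : S → U → ℝ)
    (f : S × U → ℝ) (hf : Feasible Q F f) :
    (∀ s : S, 0 < marginalS f s → s ∉ F) ∧
    (∀ s s' : S, 0 < marginalS f s → 0 < closedLoop Q (inducedPolicy G f) s s' →
      0 < marginalS f s') ∧
    (∀ s s' : S, 0 < marginalS f s → s' ∈ F → closedLoop Q (inducedPolicy G f) s s' = 0) :=
  ⟨fun s hs hsF => hs.ne' (hf.2.2 s hsF),
    fun _ _ hs => hf.marginalS_pos_of_closedLoop_pos hQ.1 G hs,
    fun _ s' hs hs'F => hf.closedLoop_inducedPolicy_eq_zero hQ.1 G hs (hf.2.2 s' hs'F)⟩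

/-- (i) The support of the marginal of a feasible pmf is disjoint from `F`; (ii) it is closed
under transitions of the closed loop induced by `f`; (iii) hence no transition from the support
into `F` has positive probability. -/
theorem stmt_3 {S U : Type*} [Fintype S] [Nonempty S] [Fintype U] [Nonempty U]
    (Q : S → U → S → ℝ) (hQ : IsKernel Q) (F : Set S)
    (G : S → U → ℝ) (hG : IsPolicy G)
    (f : S × U → ℝ) (hf : Feasible Q F f) :
    (∀ s : S, 0 < marginalS f s → s ∉ F) ∧
    (∀ s s' : S, 0 < marginalS f s → 0 < closedLoop Q (inducedPolicy G f) s s' →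
      0 < marginalS f s') ∧
    (∀ s s' : S, 0 < marginalS f s → s' ∈ F → closedLoop Q (inducedPolicy G f) s s' = 0) :=
  stmt_3_general Q hQ F G f hf
end
end
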